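/- Root-n consistency of the Z-estimator (first conclusion of Lemma 2.2). Assume θ̂_n is a consistent estimator of θ0 (θ̂_n → θ0 in probability) with Ψ_n(θ̂_n, η̂_n(θ̂_n)) = o_p(n^{-1/2}), θ0 is the unique zero of θ ↦ Ψ(θ, η0(θ)) on Θ, ‖η̂_n − η0‖ = O_p(n^{-β}) for some β ∈ (0, 1/2], and conditions (i)–(iv) hold: (i) stochastic equicontinuity: |√n(Ψ_n − Ψ)(θ̂_n, η̂_n(θ̂_n)) − √n(Ψ_n − Ψ)(θ0, η0(θ0))| / (1 + √n|Ψ_n(θ̂_n, η̂_n(θ̂_n))| + √n|Ψ(θ̂_n, η̂_n(θ̂_n))|) = o_p(1); (ii) √n Ψ_n(θ0, η0(θ0)) = O_p(1); (iii) smoothness: there exist a d×d matrix Ψ̇_1 and a continuous linear map Ψ̇_2 : E → ℝ^d such that, for (θ, η) ∈ Θ0 × H0 as θ → θ0 and ‖η − η0‖ → 0, |Ψ(θ, η(θ)) − Ψ(θ0, η0(θ0)) − (Ψ̇_1 + Ψ̇_2 ∘ η̇_0(θ0))(θ − θ0) − Ψ̇_2[(η − η0)(θ0)]| = o(|θ −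 θ0|) + o(‖η − η0‖) if β = 1/2, or = o(|θ − θ0|) + O(‖η − η0‖^α) for some α > 1 with αβ > 1/2 if 0 < β < 1/2, and the matrix A = −Ψ̇_1 − Ψ̇_2 ∘ η̇_0(θ0) is nonsingular; (iv) √n Ψ̇_2[(η̂_n − η0)(θ0)] = O_p(1). Then √n |θ̂_n − θ0| = O_p(1). -/

import Mathlib

open MeasureTheory Filter Topology ProbabilityTheory
open scoped ENNReal NNReal InnerProductSpace

noncomputable section

abbrev Euc (d : ℕ) := EuclideanSpace ℝ (Fin d)

/-- `ξ n / a n → 0` in probability, i.e. `ξ n = o_p(a n)`. -/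
def oP {Ω : Type*} [MeasurableSpace Ω] (P : Measure Ω) (ξ : ℕ → Ω → ℝ) (a : ℕ → ℝ) : Prop :=
  ∀ ε : ℝ, 0 < ε → Filter.Tendsto (fun n => P {ω | ε * a n ≤ ξ n ω}) Filter.atTop (nhds 0)

/-- `ξ n = O_p(a n)`: for every `ε > 0` there is `M` with
`P(ξ n > M * a n) ≤ ε` for all sufficiently large `n`. -/
def OP {Ω : Type*} [MeasurableSpace Ω] (P : Measure Ω) (ξ : ℕ → Ω → ℝ) (a : ℕ → ℝ) : Prop :=
  ∀ ε : ℝ, 0 < ε → ∃ M : ℝ, ∀ᶠ n in Filter.atTop, P {ω | M * a n < ξ n ω} ≤ ENNReal.ofReal ε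

open Classical in
/-- real-valued indicator of a proposition. -/
def ind (p : Prop) : ℝ := if p then 1 else 0

/-!
On the event where the stochastic-equicontinuity ratio is below `1/2` and
`√n ‖Ψₙ(θ̂ₙ, η̂ₙ(θ̂ₙ))‖ < 1`, the triangle inequality gives
`√n ‖Ψ(θ̂ₙ, η̂ₙ(θ̂ₙ))‖ ≤ 4 + 2 √n ‖Ψₙ(θ₀, η₀(θ₀))‖`, so `√n Ψ(θ̂ₙ, η̂ₙ(θ̂ₙ)) = O_p(1)`.
By consistency, `θ̂ₙ` eventually lies where the expansion (iii) applies, and there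
`Ψ(θ̂ₙ, η̂ₙ(θ̂ₙ)) = -A(θ̂ₙ - θ₀) + Ψ̇₂[(η̂ₙ - η₀)(θ₀)] + o(|θ̂ₙ - θ₀|) + O(‖η̂ₙ - η₀‖^α)`
(with `α = 1` when `β = 1/2`). Inverting `A` and absorbing the `o(|θ̂ₙ - θ₀|)` term bounds
`√n |θ̂ₙ - θ₀|` by a multiple of three terms that are each `O_p(1)`, the last one
`√n ‖η̂ₙ - η₀‖^α` because `αβ ≥ 1/2`.
-/

lemma mul_norm_le_of_equicontinuity {F : Type*} [SeminormedAddCommGroup F] [NormedSpace ℝ F]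
    {s : ℝ} (hs : 0 ≤ s) {a b c : F}
    (hratio : ‖s • (a - b) - s • c‖ / (1 + s * ‖a‖ + s * ‖b‖) < 1 / 2) (ha : s * ‖a‖ < 1) :
    s * ‖b‖ ≤ 4 + 2 * (s * ‖c‖) := by
  have hnorm : ∀ x : F, ‖s • x‖ = s * ‖x‖ := fun x => by
    rw [norm_smul, Real.norm_of_nonneg hs]
  have hdiff : ‖s • (a - b) - s • c‖ < (1 + s * ‖a‖ + s * ‖b‖) / 2 := by
    have := (div_lt_iff₀ (by positivity)).1 hratio
    linarith
  have htri : s * ‖b‖ ≤ s * ‖a‖ + ‖s • (a - b) - s • c‖ + s * ‖c‖ := by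
    rw [← hnorm, ← hnorm, ← hnorm]
    calc ‖s • b‖ = ‖s • a - (s • (a - b) - s • c) - s • c‖ := by congr 1; module
      _ ≤ _ := (norm_sub_le _ _).trans (add_le_add_left (norm_sub_le _ _) _)
  linarith

lemma sqrt_mul_rpow_le_rpow {n S M α β : ℝ} (hn : 1 ≤ n) (hS : 0 ≤ S) (hM : 0 ≤ M)
    (hSM : S ≤ M * n ^ (-β)) (hα : 0 ≤ α) (hαβ : 1 / 2 ≤ α * β) :
    Real.sqrt n * S ^ α ≤ M ^ α := by
  have hn0 : 0 ≤ n := by linarith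
  calc Real.sqrt n * S ^ α ≤ n ^ (1 / 2 : ℝ) * (M * n ^ (-β)) ^ α := by
        rw [Real.sqrt_eq_rpow]
        gcongr
    _ = M ^ α * n ^ (1 / 2 - α * β) := by
        rw [Real.mul_rpow hM (by positivity), ← Real.rpow_mul hn0, sub_eq_add_neg,
          Real.rpow_add (by linarith)]
        ring_nf
    _ ≤ M ^ α := mul_le_of_le_one_right (by positivity)
        (Real.rpow_le_one_of_one_le_of_nonpos hn (by linarith))

lemma ContinuousLinearEquiv.norm_le_of_norm_sub_neg_add_le {𝕜 E F : Type*}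
    [NontriviallyNormedField 𝕜] [SeminormedAddCommGroup E] [SeminormedAddCommGroup F]
    [NormedSpace 𝕜 E] [NormedSpace 𝕜 F] (A : E ≃L[𝕜] F) {K ε R : ℝ}
    (hK : ‖(A.symm : F →L[𝕜] E)‖ ≤ K) (hKε : K * ε ≤ 1 / 2) {v : E} {b y : F}
    (h : ‖b - (-A v + y)‖ ≤ ε * ‖v‖ + R) : ‖v‖ ≤ 2 * K * (‖b‖ + ‖y‖ + R) := by
  have hK0 : 0 ≤ K := (norm_nonneg _).trans hK
  have hAv : ‖A v‖ ≤ ‖b‖ + ‖y‖ + (ε * ‖v‖ + R) :=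
    calc ‖A v‖ = ‖(b - (-A v + y)) + -b + y‖ := by congr 1; abel
      _ ≤ ‖b - (-A v + y)‖ + ‖-b‖ + ‖y‖ := norm_add₃_le
      _ = ‖b - (-A v + y)‖ + ‖b‖ + ‖y‖ := by rw [norm_neg]
      _ ≤ ‖b‖ + ‖y‖ + (ε * ‖v‖ + R) := by linarith
  have hv : ‖v‖ ≤ K * ‖A v‖ :=
    calc ‖v‖ = ‖(A.symm : F →L[𝕜] E) (A v)‖ := by simp
      _ ≤ ‖(A.symm : F →L[𝕜] E)‖ * ‖A v‖ := ContinuousLinearMap.le_opNorm _ _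
      _ ≤ K * ‖A v‖ := by gcongr
  nlinarith [mul_le_mul_of_nonneg_left hAv hK0, mul_le_mul_of_nonneg_right hKε (norm_nonneg v)]

/-- Merges the two regimes of (iii); for `β = 1 / 2` the witnesses are `α = 1` and `C = ε`. -/
lemma exists_remainder_bound {X Y : Type*} {D : Set X} {H : Set Y} {t : X → ℝ} {s : Y → ℝ}
    {rem : X → Y → ℝ} {β : ℝ} (hs : ∀ y, 0 ≤ s y)
    (h : (β = 1 / 2 ∧ ∀ ε : ℝ, 0 < ε → ∃ δ : ℝ, 0 < δ ∧ ∀ x ∈ D, ∀ y ∈ H,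
          t x < δ → s y < δ → rem x y ≤ ε * t x + ε * s y) ∨
      (β < 1 / 2 ∧ ∃ α : ℝ, 1 < α ∧ 1 / 2 < α * β ∧ ∃ Cs : ℝ, ∀ ε : ℝ, 0 < ε →
          ∃ δ : ℝ, 0 < δ ∧ ∀ x ∈ D, ∀ y ∈ H,
          t x < δ → s y < δ → rem x y ≤ ε * t x + Cs * s y ^ α))
    {ε : ℝ} (hε : 0 < ε) :
    ∃ α C δ : ℝ, 0 ≤ α ∧ 1 / 2 ≤ α * β ∧ 0 ≤ C ∧ 0 < δ ∧ ∀ x ∈ D, ∀ y ∈ H,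
      t x < δ → s y < δ → rem x y ≤ ε * t x + C * s y ^ α := by
  rcases h with ⟨rfl, h⟩ | ⟨-, α, hα, hαβ, Cs, h⟩
  · obtain ⟨δ, hδ, h⟩ := h ε hε
    refine ⟨1, ε, δ, zero_le_one, by norm_num, hε.le, hδ, fun x hx y hy htx hsy => ?_⟩
    simpa only [Real.rpow_one] using h x hx y hy htx hsy
  · obtain ⟨δ, hδ, h⟩ := h ε hε
    refine ⟨α, |Cs|, δ, by linarith, hαβ.le, abs_nonneg Cs, hδ, fun x hx y hy htx hsy => ?_⟩
    have := mul_le_mul_of_nonneg_right (le_abs_self Cs) (Real.rpow_nonneg (hs y) α)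
    linarith [h x hx y hy htx hsy]

section Probability

variable {Ω : Type*} [MeasurableSpace Ω] {P : Measure Ω}

lemma measure_le_ofReal_of_subset_union {s t u : Set Ω} {ε : ℝ} (hε : 0 ≤ ε) (hs : s ⊆ t ∪ u)
    (ht : P t ≤ ENNReal.ofReal (ε / 2)) (hu : P u ≤ ENNReal.ofReal (ε / 2)) :
    P s ≤ ENNReal.ofReal ε :=
  calc P s ≤ P t + P u := (measure_mono hs).trans (measure_union_le t u)
    _ ≤ ENNReal.ofReal (ε / 2) + ENNReal.ofReal (ε / 2) := add_le_add ht hu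
    _ = ENNReal.ofReal ε := by rw [← ENNReal.ofReal_add (by positivity) (by positivity), add_halves]

variable (P) in
def HoldsWithProbTendingToOne (p : ℕ → Ω → Prop) : Prop :=
  ∀ ε : ℝ, 0 < ε → ∀ᶠ n in atTop, P {ω | ¬ p n ω} ≤ ENNReal.ofReal ε

lemma HoldsWithProbTendingToOne.and {p q : ℕ → Ω → Prop} (hp : HoldsWithProbTendingToOne P p)
    (hq : HoldsWithProbTendingToOne P q) :
    HoldsWithProbTendingToOne P fun n ω => p n ω ∧ q n ω := by
  intro ε hε
  filter_upwards [hp (ε / 2) (by positivity), hq (ε / 2) (by positivity)] with n hpn hqn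
  refine measure_le_ofReal_of_subset_union hε.le (fun ω hω => ?_) hpn hqn
  simpa only [Set.mem_union, Set.mem_ofPred_eq, not_and_or] using hω

lemma oP.holdsWithProbTendingToOne_lt {ξ : ℕ → Ω → ℝ} (h : oP P ξ fun _ => 1) {c : ℝ}
    (hc : 0 < c) : HoldsWithProbTendingToOne P fun n ω => ξ n ω < c := by
  intro ε hε
  simpa only [not_lt, mul_one] using
    (h c hc).eventually_le_const (ENNReal.ofReal_pos.2 hε)

lemma OP.holdsWithProbTendingToOne_lt {ξ : ℕ → Ω → ℝ} {a : ℕ → ℝ} (h : OP P ξ a)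
    (ha : Tendsto a atTop (𝓝 0)) {c : ℝ} (hc : 0 < c) :
    HoldsWithProbTendingToOne P fun n ω => ξ n ω < c := by
  intro ε hε
  obtain ⟨M, hM⟩ := h ε hε
  have hMa : Tendsto (fun n => M * a n) atTop (𝓝 0) := by
    simpa only [mul_zero] using ha.const_mul M
  filter_upwards [hM, hMa.eventually_lt_const hc] with n hn hMan
  refine (measure_mono fun ω hω => ?_).trans hn
  simp only [Set.mem_ofPred_eq, not_lt] at hω ⊢
  linarith

lemma OP_const (c : ℝ) : OP P (fun _ _ => c) fun _ => 1 :=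
  fun _ _ => ⟨c, Eventually.of_forall fun _ => by simp⟩

lemma OP.add {ξ ζ : ℕ → Ω → ℝ} {a : ℕ → ℝ} (hξ : OP P ξ a) (hζ : OP P ζ a) :
    OP P (fun n ω => ξ n ω + ζ n ω) a := by
  intro ε hε
  obtain ⟨M₁, hM₁⟩ := hξ (ε / 2) (by positivity)
  obtain ⟨M₂, hM₂⟩ := hζ (ε / 2) (by positivity)
  refine ⟨M₁ + M₂, ?_⟩
  filter_upwards [hM₁, hM₂] with n h₁ h₂
  refine measure_le_ofReal_of_subset_union hε.le (fun ω hω => ?_) h₁ h₂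
  simp only [Set.mem_union, Set.mem_ofPred_eq] at hω ⊢
  by_contra! h
  linarith

lemma OP.const_mul {ξ : ℕ → Ω → ℝ} {a : ℕ → ℝ} (h : OP P ξ a) {c : ℝ} (hc : 0 ≤ c) :
    OP P (fun n ω => c * ξ n ω) a := by
  intro ε hε
  obtain ⟨M, hM⟩ := h ε hε
  refine ⟨c * M, hM.mono fun n hn => (measure_mono fun ω hω => ?_).trans hn⟩
  simp only [Set.mem_ofPred_eq, mul_assoc] at hω ⊢
  exact lt_of_mul_lt_mul_left hω hc

lemma OP.of_le {ξ ζ : ℕ → Ω → ℝ} {a : ℕ → ℝ} {p : ℕ → Ω → Prop} (hζ : OP P ζ a)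
    (hp : HoldsWithProbTendingToOne P p) (hle : ∀ n ω, p n ω → ξ n ω ≤ ζ n ω) :
    OP P ξ a := by
  intro ε hε
  obtain ⟨M, hM⟩ := hζ (ε / 2) (by positivity)
  refine ⟨M, ?_⟩
  filter_upwards [hp (ε / 2) (by positivity), hM] with n hpn hMn
  refine measure_le_ofReal_of_subset_union hε.le (fun ω hω => ?_) hpn hMn
  simp only [Set.mem_union, Set.mem_ofPred_eq] at hω ⊢
  by_cases hpω : p n ω
  · exact Or.inr (hω.trans_le (hle n ω hpω))
  · exact Or.inl hpω

lemma OP.sqrt_mul_rpow {S : ℕ → Ω → ℝ}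
    {α β : ℝ} (h : OP P S fun n => (n : ℝ) ^ (-β)) (hS : ∀ n ω, 0 ≤ S n ω) (hα : 0 ≤ α)
    (hαβ : 1 / 2 ≤ α * β) :
    OP P (fun n ω => Real.sqrt n * S n ω ^ α) fun _ => 1 := by
  intro ε hε
  obtain ⟨M, hM⟩ := h ε hε
  refine ⟨max M 0 ^ α, ?_⟩
  filter_upwards [hM, eventually_ge_atTop 1] with n hn hn1
  refine (measure_mono fun ω hω => ?_).trans hn
  simp only [Set.mem_ofPred_eq, mul_one] at hω ⊢
  by_contra! hSM
  refine hω.not_ge (sqrt_mul_rpow_le_rpow (by exact_mod_cast hn1) (hS n ω) (le_max_right M 0)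
    (hSM.trans ?_) hα hαβ)
  gcongr
  exact le_max_left M 0

lemma OP_of_stochastic_equicontinuity {F : Type*} [SeminormedAddCommGroup F] [NormedSpace ℝ F]
    {a b c : ℕ → Ω → F}
    (hratio : oP P (fun n ω => ‖Real.sqrt n • (a n ω - b n ω) - Real.sqrt n • c n ω‖ /
      (1 + Real.sqrt n * ‖a n ω‖ + Real.sqrt n * ‖b n ω‖)) fun _ => 1)
    (ha : oP P (fun n ω => Real.sqrt n * ‖a n ω‖) fun _ => 1)
    (hc : OP P (fun n ω => Real.sqrt n * ‖c n ω‖) fun _ => 1) :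
    OP P (fun n ω => Real.sqrt n * ‖b n ω‖) fun _ => 1 :=
  ((OP_const 4).add (hc.const_mul zero_le_two)).of_le
    ((hratio.holdsWithProbTendingToOne_lt one_half_pos).and
      (ha.holdsWithProbTendingToOne_lt one_pos))
    fun _ _ h => mul_norm_le_of_equicontinuity (Real.sqrt_nonneg _) h.1 h.2

end Probability

theorem root_n_consistency_of_bundled_Z_estimator_general
    {d : ℕ} {E : Type*} [NormedAddCommGroup E] [NormedSpace ℝ E]
    {Ω : Type*} [MeasurableSpace Ω] (P : Measure Ω)
    (Θ : Set (Euc d))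
    (θ0 : Euc d)
    (Ψn : ℕ → Ω → Euc d → E → Euc d)
    (Ψ : Euc d → E → Euc d)
    (η0 : Euc d → E)
    (hzero : Ψ θ0 (η0 θ0) = 0)
    (θhat : ℕ → Ω → Euc d) (hθhatΘ : ∀ n ω, θhat n ω ∈ Θ)
    (ηhat : ℕ → Ω → Euc d → E)
    -- Ψ_n(θ̂_n, η̂_n(θ̂_n)) = o_p(n^{-1/2})
    (hroot : oP P (fun n ω => Real.sqrt n * ‖Ψn n ω (θhat n ω) (ηhat n ω (θhat n ω))‖)
      (fun _ => 1))
    -- (i) stochastic equicontinuity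
    (hse : oP P (fun n ω =>
        ‖(Real.sqrt n) • (Ψn n ω (θhat n ω) (ηhat n ω (θhat n ω)) -
              Ψ (θhat n ω) (ηhat n ω (θhat n ω))) -
          (Real.sqrt n) • (Ψn n ω θ0 (η0 θ0) - Ψ θ0 (η0 θ0))‖ /
          (1 + Real.sqrt n * ‖Ψn n ω (θhat n ω) (ηhat n ω (θhat n ω))‖ +
            Real.sqrt n * ‖Ψ (θhat n ω) (ηhat n ω (θhat n ω))‖)) (fun _ => 1))
    -- (ii) √n Ψ_n(θ0, η0(θ0)) = O_p(1)
    (htight : OP P (fun n ω => Real.sqrt n * ‖Ψn n ω θ0 (η0 θ0)‖) (fun _ => 1))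
    (Θ0 : Set (Euc d)) (hΘ0nbhd : Θ0 ∈ nhdsWithin θ0 Θ)
    (H0 : Set (Euc d → E)) (hηhatH0 : ∀ n ω, ηhat n ω ∈ H0)
    (Dη : (Euc d → E) → Euc d → (Euc d →L[ℝ] E))
    -- consistency of θ̂_n
    (hcons : oP P (fun n ω => ‖θhat n ω - θ0‖) (fun _ => 1))
    -- ‖η̂_n − η0‖ = O_p(n^{-β}), 0 < β ≤ 1/2
    (β : ℝ) (hβpos : 0 < β)
    (hηrate : OP P (fun n ω => ⨆ θ : Θ, ‖ηhat n ω θ - η0 θ‖) (fun n => (n : ℝ) ^ (-β)))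
    -- (iii) smoothness: derivatives Ψ̇₁, Ψ̇₂ and nonsingular A = −Ψ̇₁ − Ψ̇₂ ∘ η̇₀(θ0)
    (Ψdot1 : Euc d →L[ℝ] Euc d) (Ψdot2 : E →L[ℝ] Euc d)
    (A : Euc d ≃L[ℝ] Euc d)
    (hA : ∀ v : Euc d, A v = -(Ψdot1 v) - Ψdot2 (Dη η0 θ0 v))
    (hsmooth :
      (β = 1 / 2 ∧ ∀ ε : ℝ, 0 < ε → ∃ δ : ℝ, 0 < δ ∧ ∀ θ ∈ Θ0, ∀ η ∈ H0,
          ‖θ - θ0‖ < δ → (⨆ θ' : Θ, ‖η θ' - η0 θ'‖) < δ →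
          ‖Ψ θ (η θ) - Ψ θ0 (η0 θ0) -
              (Ψdot1 (θ - θ0) + Ψdot2 (Dη η0 θ0 (θ - θ0)) + Ψdot2 (η θ0 - η0 θ0))‖ ≤
            ε * ‖θ - θ0‖ + ε * (⨆ θ' : Θ, ‖η θ' - η0 θ'‖)) ∨
      (β < 1 / 2 ∧ ∃ α : ℝ, 1 < α ∧ 1 / 2 < α * β ∧ ∃ Cs : ℝ, ∀ ε : ℝ, 0 < ε →
          ∃ δ : ℝ, 0 < δ ∧ ∀ θ ∈ Θ0, ∀ η ∈ H0,
          ‖θ - θ0‖ < δ → (⨆ θ' : Θ, ‖η θ' - η0 θ'‖) < δ →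
          ‖Ψ θ (η θ) - Ψ θ0 (η0 θ0) -
              (Ψdot1 (θ - θ0) + Ψdot2 (Dη η0 θ0 (θ - θ0)) + Ψdot2 (η θ0 - η0 θ0))‖ ≤
            ε * ‖θ - θ0‖ + Cs * (⨆ θ' : Θ, ‖η θ' - η0 θ'‖) ^ α))
    -- (iv)
    (hiv : OP P (fun n ω => Real.sqrt n * ‖Ψdot2 (ηhat n ω θ0 - η0 θ0)‖) (fun _ => 1))
 :
    OP P (fun n ω => Real.sqrt n * ‖θhat n ω - θ0‖) (fun _ => 1) := by
  set K := ‖(A.symm : Euc d →L[ℝ] Euc d)‖ + 1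
  have hK : 0 < K := by positivity
  have hS0 : ∀ η : Euc d → E, 0 ≤ ⨆ θ' : Θ, ‖η θ' - η0 θ'‖ :=
    fun _ => Real.iSup_nonneg fun _ => norm_nonneg _
  obtain ⟨α, C, δ, hα, hαβ, hC, hδ, hrem⟩ :=
    exists_remainder_bound hS0 hsmooth (ε := 1 / (2 * K)) (by positivity)
  have hlin : ∀ v, Ψdot1 v + Ψdot2 (Dη η0 θ0 v) = -A v := fun v => by rw [hA]; abel
  simp only [hzero, hlin, sub_zero] at hrem hse
  obtain ⟨r, hr, hball⟩ := Metric.mem_nhdsWithin_iff.1 hΘ0nbhd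
  have hrate := (hηrate.sqrt_mul_rpow (fun _ _ => hS0 _) hα hαβ).const_mul hC
  refine ((((OP_of_stochastic_equicontinuity hse hroot htight).add hiv).add hrate).const_mul
    (by positivity : (0 : ℝ) ≤ 2 * K)).of_le
    ((hcons.holdsWithProbTendingToOne_lt (lt_min hδ hr)).and
      (hηrate.holdsWithProbTendingToOne_lt ((tendsto_rpow_neg_atTop hβpos).comp
        tendsto_natCast_atTop_atTop) hδ)) fun n ω ⟨hθ, hη⟩ => ?_
  have hθΘ0 : θhat n ω ∈ Θ0 :=
    hball ⟨by simpa [dist_eq_norm] using hθ.trans_le (min_le_right δ r), hθhatΘ n ω⟩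
  have hKε : K * (1 / (2 * K)) ≤ 1 / 2 := le_of_eq (by field_simp [hK.ne'])
  have hθbound := A.norm_le_of_norm_sub_neg_add_le (le_add_of_nonneg_right zero_le_one) hKε
    (hrem _ hθΘ0 _ (hηhatH0 n ω) (hθ.trans_le (min_le_left δ r)) hη)
  exact (mul_le_mul_of_nonneg_left hθbound (Real.sqrt_nonneg _)).trans_eq (by ring)

/-- Lemma 2.2, first conclusion: root-n consistency of the Z-estimator. -/
theorem root_n_consistency_of_bundled_Z_estimator
    {d : ℕ} (hd : 1 ≤ d) {E : Type*} [NormedAddCommGroup E] [NormedSpace ℝ E]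
    {Ω : Type*} [MeasurableSpace Ω] (P : Measure Ω) [IsProbabilityMeasure P]
    (Θ : Set (Euc d)) (hΘ : IsCompact Θ)
    (θ0 : Euc d) (hθ0 : θ0 ∈ Θ)
    (Ψn : ℕ → Ω → Euc d → E → Euc d)
    (Ψ : Euc d → E → Euc d)
    (η0 : Euc d → E)
    (hzero : Ψ θ0 (η0 θ0) = 0)
    (θhat : ℕ → Ω → Euc d) (hθhatΘ : ∀ n ω, θhat n ω ∈ Θ)
    (ηhat : ℕ → Ω → Euc d → E)
    -- Ψ_n(θ̂_n, η̂_n(θ̂_n)) = o_p(n^{-1/2})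
    (hroot : oP P (fun n ω => Real.sqrt n * ‖Ψn n ω (θhat n ω) (ηhat n ω (θhat n ω))‖)
      (fun _ => 1))
    -- (i) stochastic equicontinuity
    (hse : oP P (fun n ω =>
        ‖(Real.sqrt n) • (Ψn n ω (θhat n ω) (ηhat n ω (θhat n ω)) -
              Ψ (θhat n ω) (ηhat n ω (θhat n ω))) -
          (Real.sqrt n) • (Ψn n ω θ0 (η0 θ0) - Ψ θ0 (η0 θ0))‖ /
          (1 + Real.sqrt n * ‖Ψn n ω (θhat n ω) (ηhat n ω (θhat n ω))‖ +
            Real.sqrt n * ‖Ψ (θhat n ω) (ηhat n ω (θhat n ω))‖)) (fun _ => 1))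
    -- (ii) √n Ψ_n(θ0, η0(θ0)) = O_p(1)
    (htight : OP P (fun n ω => Real.sqrt n * ‖Ψn n ω θ0 (η0 θ0)‖) (fun _ => 1))
    (Θ0 : Set (Euc d)) (hΘ0sub : Θ0 ⊆ Θ) (hΘ0nbhd : Θ0 ∈ nhdsWithin θ0 Θ)
    (H0 : Set (Euc d → E)) (hη0H0 : η0 ∈ H0) (hηhatH0 : ∀ n ω, ηhat n ω ∈ H0)
    -- members of H0 are continuously differentiable in θ on Θ0 with uniformly bounded derivatives
    (Dη : (Euc d → E) → Euc d → (Euc d →L[ℝ] E))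
    (hDη : ∀ η ∈ H0, ∀ θ ∈ Θ0, HasFDerivWithinAt η (Dη η θ) Θ0 θ)
    (hDηcont : ∀ η ∈ H0, ContinuousOn (Dη η) Θ0)
    (hDηbdd : ∃ K : ℝ, ∀ η ∈ H0, ∀ θ ∈ Θ0, ‖Dη η θ‖ ≤ K)
    -- θ0 the unique zero of θ ↦ Ψ(θ, η0(θ)) on Θ
    (huniq : ∀ θ ∈ Θ, Ψ θ (η0 θ) = 0 → θ = θ0)
    -- consistency of θ̂_n
    (hcons : oP P (fun n ω => ‖θhat n ω - θ0‖) (fun _ => 1))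
    -- ‖η̂_n − η0‖ = O_p(n^{-β}), 0 < β ≤ 1/2
    (β : ℝ) (hβpos : 0 < β) (hβle : β ≤ 1 / 2)
    (hηrate : OP P (fun n ω => ⨆ θ : Θ, ‖ηhat n ω θ - η0 θ‖) (fun n => (n : ℝ) ^ (-β)))
    -- (iii) smoothness: derivatives Ψ̇₁, Ψ̇₂ and nonsingular A = −Ψ̇₁ − Ψ̇₂ ∘ η̇₀(θ0)
    (Ψdot1 : Euc d →L[ℝ] Euc d) (Ψdot2 : E →L[ℝ] Euc d)
    (A : Euc d ≃L[ℝ] Euc d)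
    (hA : ∀ v : Euc d, A v = -(Ψdot1 v) - Ψdot2 (Dη η0 θ0 v))
    (hsmooth :
      (β = 1 / 2 ∧ ∀ ε : ℝ, 0 < ε → ∃ δ : ℝ, 0 < δ ∧ ∀ θ ∈ Θ0, ∀ η ∈ H0,
          ‖θ - θ0‖ < δ → (⨆ θ' : Θ, ‖η θ' - η0 θ'‖) < δ →
          ‖Ψ θ (η θ) - Ψ θ0 (η0 θ0) -
              (Ψdot1 (θ - θ0) + Ψdot2 (Dη η0 θ0 (θ - θ0)) + Ψdot2 (η θ0 - η0 θ0))‖ ≤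
            ε * ‖θ - θ0‖ + ε * (⨆ θ' : Θ, ‖η θ' - η0 θ'‖)) ∨
      (β < 1 / 2 ∧ ∃ α : ℝ, 1 < α ∧ 1 / 2 < α * β ∧ ∃ Cs : ℝ, ∀ ε : ℝ, 0 < ε →
          ∃ δ : ℝ, 0 < δ ∧ ∀ θ ∈ Θ0, ∀ η ∈ H0,
          ‖θ - θ0‖ < δ → (⨆ θ' : Θ, ‖η θ' - η0 θ'‖) < δ →
          ‖Ψ θ (η θ) - Ψ θ0 (η0 θ0) -
              (Ψdot1 (θ - θ0) + Ψdot2 (Dη η0 θ0 (θ - θ0)) + Ψdot2 (η θ0 - η0 θ0))‖ ≤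
            ε * ‖θ - θ0‖ + Cs * (⨆ θ' : Θ, ‖η θ' - η0 θ'‖) ^ α))
    -- (iv)
    (hiv : OP P (fun n ω => Real.sqrt n * ‖Ψdot2 (ηhat n ω θ0 - η0 θ0)‖) (fun _ => 1))
 :
    OP P (fun n ω => Real.sqrt n * ‖θhat n ω - θ0‖) (fun _ => 1) :=
  root_n_consistency_of_bundled_Z_estimator_general P Θ θ0 Ψn Ψ η0 hzero θhat hθhatΘ ηhat hroot hse
    htight Θ0 hΘ0nbhd H0 hηhatH0 Dη hcons β hβpos hηrate Ψdot1 Ψdot2 A hA hsmooth hiv
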